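/- arXiv:1501.01611 — 2 statements merged into one kernel-verified Lean document; each statement's English description precedes it below -/
import Mathlib

section
/- For every integer m ≥ 2, the sum of W^m over all triples (W, H₁, H₂) of positive integers with W(H₁ + 2H₂) ≤ 2N satisfies: lim_{N→∞} (1/N^{m+1}) ∑_{W(H₁+2H₂)≤2N} W^m = (1/(2(m+1))) · (2^{m+1}·ζ(m) − (2^{m+1}+1)·ζ(m+1)). -/
/-!
For fixed `H₁, H₂` let `s = H₁ + 2H₂` and `K = ⌊2N/s⌋`. The sum over `W` is `∑_{W ≤ K} W^m`, which
lies between `K^(m+1)/(m+1)` and `K^(m+1)/(m+1) + K^m` by comparison with `∫ x^m`, so after division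
by `N^(m+1)` it tends to `(2/s)^(m+1)/(m+1)` and is dominated by `(2/s)^(m+1)`. Dominated
convergence gives the limit `2^(m+1)/(m+1) · ∑_{H₁,H₂ ≥ 1} (H₁ + 2H₂)^-(m+1)`. Exactly
`⌊(n-1)/2⌋ = ((n-1) - [2 ∣ n])/2` pairs have `H₁ + 2H₂ = n`, so this double series is
`(ζ(m) - ζ(m+1) - 2^-(m+1) ζ(m+1))/2`.
-/

/-- ζ(s) = ∑_{n=1}^∞ 1/n^s for an integer s. -/
noncomputable def zetaVal (s : ℕ) : ℝ := ∑' n : ℕ, 1 / ((n : ℝ) + 1) ^ s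

open Filter Finset Topology

theorem pow_succ_div_le_sum_range_succ_pow (m K : ℕ) :
    (K : ℝ) ^ (m + 1) / (m + 1) ≤ ∑ w ∈ range K, ((w : ℝ) + 1) ^ m := by
  have h := (pow_left_monotoneOn.mono Set.Icc_subset_Ici_self :
    MonotoneOn (fun x : ℝ => x ^ m) (Set.Icc 0 (0 + K))).integral_le_sum
  simp only [integral_pow, zero_add, Nat.cast_add, Nat.cast_one] at h
  simpa [zero_pow (Nat.succ_ne_zero m)] using h

theorem sum_range_succ_pow_le (m K : ℕ) :
    ∑ w ∈ range K, ((w : ℝ) + 1) ^ m ≤ (K : ℝ) ^ (m + 1) / (m + 1) + (K : ℝ) ^ m := by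
  have h := (pow_left_monotoneOn.mono Set.Icc_subset_Ici_self :
    MonotoneOn (fun x : ℝ => x ^ m) (Set.Icc 0 (0 + K))).sum_le_integral
  simp only [integral_pow, zero_add] at h
  -- `∑_{w<K} (w+1)^m + 0^m = ∑_{w<K} w^m + K^m`
  have hshift := (sum_range_succ (fun w : ℕ => (w : ℝ) ^ m) K).symm.trans
    (sum_range_succ' (fun w : ℕ => (w : ℝ) ^ m) K)
  push_cast at hshift
  have h0 : (0 : ℝ) ≤ 0 ^ m := pow_nonneg le_rfl m
  rw [zero_pow (Nat.succ_ne_zero m), sub_zero] at h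
  linarith

theorem sum_range_succ_pow_le_pow_succ (m K : ℕ) :
    ∑ w ∈ range K, ((w : ℝ) + 1) ^ m ≤ (K : ℝ) ^ (m + 1) := by
  calc ∑ w ∈ range K, ((w : ℝ) + 1) ^ m ≤ #(range K) • (K : ℝ) ^ m := by
        refine sum_le_card_nsmul _ _ _ fun w hw => pow_le_pow_left₀ (by positivity) ?_ m
        exact_mod_cast mem_range.mp hw
    _ = (K : ℝ) ^ (m + 1) := by rw [card_range, nsmul_eq_mul, pow_succ']

theorem tendsto_sum_range_succ_pow_div {K : ℕ → ℕ} {c : ℝ} (m : ℕ)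
    (hK : Tendsto (fun N => (K N : ℝ) / N) atTop (𝓝 c)) :
    Tendsto (fun N => (∑ w ∈ range (K N), ((w : ℝ) + 1) ^ m) / (N : ℝ) ^ (m + 1)) atTop
      (𝓝 (c ^ (m + 1) / (m + 1))) := by
  have hlower := (hK.pow (m + 1)).div_const ((m : ℝ) + 1)
  have hupper := hlower.add ((hK.pow m).mul tendsto_one_div_atTop_nhds_zero_nat)
  rw [mul_zero, add_zero] at hupper
  refine tendsto_of_tendsto_of_tendsto_of_le_of_le' hlower hupper ?_ ?_
  · refine Eventually.of_forall fun N => ?_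
    rw [div_pow, div_div, mul_comm ((N : ℝ) ^ (m + 1)), ← div_div]
    gcongr
    exact pow_succ_div_le_sum_range_succ_pow m (K N)
  · filter_upwards [eventually_gt_atTop 0] with N hN
    have hN : (0 : ℝ) < N := by exact_mod_cast hN
    calc (∑ w ∈ range (K N), ((w : ℝ) + 1) ^ m) / (N : ℝ) ^ (m + 1)
        ≤ ((K N : ℝ) ^ (m + 1) / (m + 1) + (K N : ℝ) ^ m) / (N : ℝ) ^ (m + 1) := by
          gcongr; exact sum_range_succ_pow_le m (K N)
      _ = _ := by rw [div_pow, div_pow, pow_succ (N : ℝ)]; field_simp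

theorem tendsto_nat_mul_div_div_atTop (a s : ℕ) :
    Tendsto (fun N : ℕ => ((a * N / s : ℕ) : ℝ) / N) atTop (𝓝 ((a : ℝ) / s)) := by
  have h := (tendsto_nat_floor_mul_div_atTop (R := ℝ) (a := (a : ℝ) / s) (by positivity)).comp
    tendsto_natCast_atTop_atTop
  refine h.congr fun N => ?_
  simp only [Function.comp_apply]
  rw [div_mul_eq_mul_div, ← Nat.cast_mul, Nat.floor_div_eq_div]

theorem sum_range_succ_pow_mul_div_le (m a s N : ℕ) :
    (∑ w ∈ range (a * N / s), ((w : ℝ) + 1) ^ m) / (N : ℝ) ^ (m + 1) ≤ ((a : ℝ) / s) ^ (m + 1) := by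
  rcases N.eq_zero_or_pos with rfl | hN
  · rw [Nat.cast_zero, zero_pow (Nat.succ_ne_zero m), div_zero]
    positivity
  have hN : (0 : ℝ) < N := by exact_mod_cast hN
  rw [div_le_iff₀ (by positivity), ← mul_pow]
  calc ∑ w ∈ range (a * N / s), ((w : ℝ) + 1) ^ m ≤ ((a * N / s : ℕ) : ℝ) ^ (m + 1) :=
        sum_range_succ_pow_le_pow_succ m _
    _ ≤ ((a : ℝ) / s * N) ^ (m + 1) := by
        gcongr
        exact Nat.cast_div_le.trans_eq (by push_cast; ring)

/-- `(j, b) ↦ (j + 2b + 2, b)` maps `ℕ × ℕ` onto `{(n, b) | b < n / 2}`, whose fibre over `n`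
has `n / 2` elements. -/
theorem hasSum_add_two_mul_add_two {f : ℕ → ℝ} (hf : 0 ≤ f)
    (h : Summable fun n : ℕ => (n : ℝ) * f n) :
    HasSum (fun p : ℕ × ℕ => f (p.1 + 2 * p.2 + 2)) (∑' n, ((n / 2 : ℕ) : ℝ) * f n) := by
  set G : ℕ × ℕ → ℝ := fun q => if q.2 < q.1 / 2 then f q.1 else 0 with hG
  have hfiber : ∀ n, HasSum (fun b => G (n, b)) ((n / 2 : ℕ) * f n) := by
    intro n
    have hfin : HasSum (fun b => G (n, b)) (∑ b ∈ range (n / 2), G (n, b)) :=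
      hasSum_sum_of_ne_finset_zero fun b hb => if_neg (by simpa using hb)
    simp only [hG, sum_ite_of_true fun b hb => mem_range.mp hb] at hfin
    rwa [sum_const, card_range, nsmul_eq_mul] at hfin
  have hsum : Summable G := by
    refine (summable_prod_of_nonneg fun q => ?_).mpr ⟨fun n => (hfiber n).summable, ?_⟩
    · simp only [hG]; split_ifs; exacts [hf q.1, le_rfl]
    · refine h.of_nonneg_of_le (fun n => ?_) (fun n => ?_) |>.congr fun n => (hfiber n).tsum_eq.symm
      · exact mul_nonneg (Nat.cast_nonneg _) (hf n)
      · exact mul_le_mul_of_nonneg_right (by exact_mod_cast Nat.div_le_self n 2) (hf n)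
  have hG_sum : HasSum G (∑' n, ((n / 2 : ℕ) : ℝ) * f n) :=
    (hsum.hasSum.prod_fiberwise hfiber).tsum_eq ▸ hsum.hasSum
  have hinj : Function.Injective fun p : ℕ × ℕ => (p.1 + 2 * p.2 + 2, p.2) := by
    rintro ⟨j, b⟩ ⟨j', b'⟩ h
    simp only [Prod.mk.injEq] at h ⊢
    omega
  refine ((hinj.hasSum_iff fun q hq => if_neg fun hlt => hq ⟨(q.1 - 2 * q.2 - 2, q.2), ?_⟩).mpr
    hG_sum).congr_fun fun p => ?_
  · ext <;> simp only; omega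
  · simp only [Function.comp_apply]
    rw [if_pos (by omega)]

theorem summable_one_div_succ_pow {s : ℕ} (hs : 2 ≤ s) :
    Summable fun n : ℕ => 1 / ((n : ℝ) + 1) ^ s := by
  have h := (summable_nat_add_iff 1).mpr (Real.summable_one_div_nat_pow.mpr (by omega : 1 < s))
  exact h.congr fun n => by push_cast; rfl

theorem hasSum_nat_mul_one_div_succ_pow {m : ℕ} (hm : 2 ≤ m) :
    HasSum (fun n : ℕ => (n : ℝ) * (1 / ((n : ℝ) + 1) ^ (m + 1)))
      (zetaVal m - zetaVal (m + 1)) := by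
  refine ((summable_one_div_succ_pow hm).hasSum.sub
    (summable_one_div_succ_pow (by omega : 2 ≤ m + 1)).hasSum).congr_fun fun n => ?_
  field_simp
  ring

theorem hasSum_mod_two_mul_one_div_succ_pow {s : ℕ} (hs : 2 ≤ s) :
    HasSum (fun n : ℕ => ((n % 2 : ℕ) : ℝ) * (1 / ((n : ℝ) + 1) ^ s))
      ((1 / 2) ^ s * zetaVal s) := by
  have hinj : Function.Injective fun i : ℕ => 2 * i + 1 := fun i j h => by simpa using h
  refine (hinj.hasSum_iff fun n hn => ?_).mp (((summable_one_div_succ_pow hs).hasSum.mul_left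
    ((1 / 2) ^ s)).congr_fun fun i => ?_)
  · have : n % 2 = 0 := by
      by_contra h
      exact hn ⟨n / 2, show 2 * (n / 2) + 1 = n by omega⟩
    simp [this]
  · simp only [Function.comp_apply]
    rw [Nat.mul_add_mod_self_left]
    push_cast
    rw [show 2 * (i : ℝ) + 1 + 1 = 2 * (i + 1) by ring, mul_pow, one_div, one_div, one_div,
      mul_inv, inv_pow, one_mul]

theorem tsum_div_two_mul_one_div_succ_pow {m : ℕ} (hm : 2 ≤ m) :
    ∑' n : ℕ, ((n / 2 : ℕ) : ℝ) * (1 / ((n : ℝ) + 1) ^ (m + 1))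
      = (zetaVal m - (1 + (1 / 2) ^ (m + 1)) * zetaVal (m + 1)) / 2 := by
  have hsplit : ∀ n : ℕ, ((n / 2 : ℕ) : ℝ) = ((n : ℝ) - ((n % 2 : ℕ) : ℝ)) / 2 := fun n => by
    rw [eq_div_iff two_ne_zero, eq_sub_iff_add_eq, mul_comm]
    exact_mod_cast Nat.div_add_mod n 2
  simp_rw [hsplit, sub_div, sub_mul, div_mul_eq_mul_div]
  rw [(((hasSum_nat_mul_one_div_succ_pow hm).div_const 2).sub
    ((hasSum_mod_two_mul_one_div_succ_pow (by omega : 2 ≤ m + 1)).div_const 2)).tsum_eq]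
  ring

theorem hasSum_two_div_add_two_mul_add_three_pow {m : ℕ} (hm : 2 ≤ m) :
    HasSum (fun p : ℕ × ℕ => ((2 : ℝ) / (p.1 + 2 * p.2 + 3 : ℕ)) ^ (m + 1) / (m + 1))
      ((1 / (2 * ((m : ℝ) + 1))) *
        (2 ^ (m + 1) * zetaVal m - (2 ^ (m + 1) + 1) * zetaVal (m + 1))) := by
  have hD := hasSum_add_two_mul_add_two (f := fun n : ℕ => 1 / ((n : ℝ) + 1) ^ (m + 1))
    (fun n => by positivity) (hasSum_nat_mul_one_div_succ_pow hm).summable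
  rw [tsum_div_two_mul_one_div_succ_pow hm] at hD
  have hval : (1 / (2 * ((m : ℝ) + 1))) *
      (2 ^ (m + 1) * zetaVal m - (2 ^ (m + 1) + 1) * zetaVal (m + 1))
      = (2 : ℝ) ^ (m + 1) / (m + 1) *
        ((zetaVal m - (1 + (1 / 2) ^ (m + 1)) * zetaVal (m + 1)) / 2) := by
    rw [div_pow, one_pow]
    field_simp
  rw [hval]
  refine (hD.mul_left _).congr_fun fun p => ?_
  push_cast
  rw [div_pow]
  ring

/-- `(W, H₁, H₂) = (w + 1, j + 1, b + 1)`, so that `H₁ + 2 H₂ = j + 2 b + 3`. -/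
def pnatTripleEquiv : (ℕ × ℕ) × ℕ ≃ ℕ+ × ℕ+ × ℕ+ where
  toFun x := (x.2.succPNat, x.1.1.succPNat, x.1.2.succPNat)
  invFun t := ((t.2.1.natPred, t.2.2.natPred), t.1.natPred)
  left_inv x := by simp
  right_inv t := by simp

theorem hasSum_ite_succ_mul_le (m M s : ℕ) (hs : 0 < s) :
    HasSum (fun w : ℕ => if (w + 1) * s ≤ M then ((w : ℝ) + 1) ^ m else 0)
      (∑ w ∈ range (M / s), ((w : ℝ) + 1) ^ m) := by
  have hiff : ∀ w, (w + 1) * s ≤ M ↔ w ∈ range (M / s) := fun w => by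
    rw [mem_range, Nat.lt_iff_add_one_le, Nat.le_div_iff_mul_le hs]
  simp_rw [hiff]
  have h : HasSum (fun w : ℕ => if w ∈ range (M / s) then ((w : ℝ) + 1) ^ m else 0)
      (∑ w ∈ range (M / s), if w ∈ range (M / s) then ((w : ℝ) + 1) ^ m else 0) :=
    hasSum_sum_of_ne_finset_zero fun w hw => if_neg hw
  rwa [sum_ite_of_true fun w hw => hw] at h

theorem tsum_ite_pnat_triple_eq (m N : ℕ) :
    ∑' t : ℕ+ × ℕ+ × ℕ+,
        (if (t.1 : ℕ) * ((t.2.1 : ℕ) + 2 * (t.2.2 : ℕ)) ≤ 2 * N then ((t.1 : ℕ) : ℝ) ^ m else 0)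
      = ∑' p : ℕ × ℕ, ∑ w ∈ range (2 * N / (p.1 + 2 * p.2 + 3)), ((w : ℝ) + 1) ^ m := by
  set g : ℕ+ × ℕ+ × ℕ+ → ℝ := fun t =>
    if (t.1 : ℕ) * ((t.2.1 : ℕ) + 2 * (t.2.2 : ℕ)) ≤ 2 * N then ((t.1 : ℕ) : ℝ) ^ m else 0
  let F : (ℕ × ℕ) × ℕ → ℝ := fun x =>
    if (x.2 + 1) * (x.1.1 + 2 * x.1.2 + 3) ≤ 2 * N then ((x.2 : ℝ) + 1) ^ m else 0
  have hF : ∀ x, g (pnatTripleEquiv x) = F x := fun x => by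
    simp only [g, F, pnatTripleEquiv, Equiv.coe_fn_mk, Nat.succPNat_coe, Nat.succ_eq_add_one,
      Nat.cast_succ]
    congr 2
    ring
  have hsupp : Function.support F ⊆ Set.Iic ((2 * N, 2 * N), 2 * N) := fun x hx => by
    simp only [F, Function.mem_support, ne_eq, ite_eq_right_iff, Classical.not_imp] at hx
    have h1 : x.2 + 1 ≤ 2 * N := le_trans (Nat.le_mul_of_pos_right _ (by omega)) hx.1
    have h2 : x.1.1 + 2 * x.1.2 + 3 ≤ 2 * N := le_trans (Nat.le_mul_of_pos_left _ (by omega)) hx.1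
    simp only [Set.mem_Iic, Prod.le_def]
    omega
  have hsum : Summable F := summable_of_hasFiniteSupport ((Set.finite_Iic _).subset hsupp)
  rw [← pnatTripleEquiv.tsum_eq g, tsum_congr hF]
  exact (hsum.hasSum.prod_fiberwise fun p =>
    hasSum_ite_succ_mul_le m (2 * N) (p.1 + 2 * p.2 + 3) (by omega)).tsum_eq.symm

theorem combi1 (m : ℕ) (hm : 2 ≤ m) :
    Filter.Tendsto
      (fun N : ℕ =>
        (∑' t : ℕ+ × ℕ+ × ℕ+,
            if (t.1 : ℕ) * ((t.2.1 : ℕ) + 2 * (t.2.2 : ℕ)) ≤ 2 * N then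
              ((t.1 : ℕ) : ℝ) ^ m
            else 0)
          / (N : ℝ) ^ (m + 1))
      Filter.atTop
      (nhds ((1 / (2 * ((m : ℝ) + 1))) *
        (2 ^ (m + 1) * zetaVal m - (2 ^ (m + 1) + 1) * zetaVal (m + 1)))) := by
  have hlimit := hasSum_two_div_add_two_mul_add_three_pow hm
  have hbound : Summable fun p : ℕ × ℕ => ((2 : ℝ) / (p.1 + 2 * p.2 + 3 : ℕ)) ^ (m + 1) :=
    (hlimit.summable.mul_left ((m : ℝ) + 1)).congr fun p => by field_simp
  have key := tendsto_tsum_of_dominated_convergence hbound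
    (fun p => tendsto_sum_range_succ_pow_div m (tendsto_nat_mul_div_div_atTop 2 _))
    (Eventually.of_forall fun N p => by
      rw [Real.norm_of_nonneg (by positivity)]
      exact sum_range_succ_pow_mul_div_le m 2 _ N)
  rw [Nat.cast_ofNat, hlimit.tsum_eq] at key
  refine key.congr fun N => ?_
  rw [tsum_ite_pnat_triple_eq, tsum_div_const]
end

section
/- Let m be a nonnegative integer, ρ a real number, and (a_d)_{d≥1} a sequence of real numbers such that a_d/d^m → ρ as d → ∞. Then the power series ∑_{d=1}^∞ a_d q^d converges for every real q with 0 ≤ q < 1, and lim_{q→1⁻} (1−q)^{m+1} · ∑_{d=1}^∞ a_d q^d = ρ · m!. -/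
/-!
The weights `c d = (d + m).choose m` have generating function `∑ c d q ^ d = (1 - q)⁻¹ ^ (m + 1)`
and satisfy `c d ~ (d + 1) ^ m / m!`, so `a (d + 1) = ρ m! c d + o(c d)`. An Abelian argument shows
that an `o(c d)` perturbation of the coefficients changes the generating function only by
`o((1 - q)⁻¹ ^ (m + 1))` as `q → 1⁻`: for `d ≥ N` it is at most `ε c d`, and the finitely many
remaining terms are bounded while the generating function of `c` blows up.
-/

open Filter Finset Asymptotics Topology

section Abelian

variable {e w : ℕ → ℝ}

theorem summable_mul_pow_of_isBigO {q : ℝ} (hw : Summable fun d => w d * q ^ d)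
    (h : e =O[atTop] w) : Summable fun d => e d * q ^ d :=
  summable_of_isBigO_nat hw (h.mul (isBigO_refl _ _))

theorem isLittleO_tsum_mul_pow_of_isLittleO (hw0 : ∀ d, 0 ≤ w d)
    (hw : ∀ᶠ q in 𝓝[<] 1, Summable fun d => w d * q ^ d)
    (hW : Tendsto (fun q => ∑' d, w d * q ^ d) (𝓝[<] 1) atTop) (he : e =o[atTop] w) :
    (fun q => ∑' d, e d * q ^ d) =o[𝓝[<] 1] fun q => ∑' d, w d * q ^ d := by
  refine IsLittleO.of_bound fun ε hε => ?_
  obtain ⟨N, hN⟩ := eventually_atTop.1 (he.bound (half_pos hε))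
  set M := ∑ d ∈ range N, |e d|
  filter_upwards [hw, Ioo_mem_nhdsLT zero_lt_one, hW.eventually_ge_atTop (2 * M / ε)]
    with q hwq ⟨hq0, hq1⟩ hMq
  set head : ℕ → ℝ := Set.indicator (range N : Set ℕ) fun d => |e d| with head_def
  have hhead : HasSum head M := hasSum_subtype_iff_indicator.1 ((range N).hasSum _)
  have hbound : ∀ d, ‖e d * q ^ d‖ ≤ head d + ε / 2 * (w d * q ^ d) := by
    intro d
    have hqd : 0 ≤ q ^ d := pow_nonneg hq0.le d
    rw [norm_mul, norm_pow, Real.norm_of_nonneg hq0.le, Real.norm_eq_abs, head_def]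
    by_cases hd : d < N
    · rw [Set.indicator_of_mem (mem_coe.2 (mem_range.2 hd))]
      have := mul_le_of_le_one_right (abs_nonneg (e d)) (pow_le_one₀ (n := d) hq0.le hq1.le)
      have := mul_nonneg (half_pos hε).le (mul_nonneg (hw0 d) hqd)
      linarith
    · rw [Set.indicator_of_notMem (mt mem_range.1 hd), zero_add, ← mul_assoc]
      have := hN d (not_lt.1 hd)
      rw [Real.norm_eq_abs, Real.norm_of_nonneg (hw0 d)] at this
      exact mul_le_mul_of_nonneg_right this hqd
  have hW0 : 0 ≤ ∑' d, w d * q ^ d :=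
    tsum_nonneg fun d => mul_nonneg (hw0 d) (pow_nonneg hq0.le d)
  have hM : M ≤ ε / 2 * ∑' d, w d * q ^ d := by
    rw [div_le_iff₀ hε] at hMq
    linarith
  calc ‖∑' d, e d * q ^ d‖ ≤ M + ε / 2 * ∑' d, w d * q ^ d :=
        tsum_of_norm_bounded (hhead.add (hwq.hasSum.mul_left (ε / 2))) hbound
    _ ≤ ε * ‖∑' d, w d * q ^ d‖ := by
        rw [Real.norm_of_nonneg hW0]
        linarith

theorem tendsto_tsum_mul_pow_div_tsum {b : ℕ → ℝ} {L : ℝ} (hw0 : ∀ d, 0 < w d)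
    (hw : ∀ᶠ q in 𝓝[<] 1, Summable fun d => w d * q ^ d)
    (hW : Tendsto (fun q => ∑' d, w d * q ^ d) (𝓝[<] 1) atTop)
    (hb : Tendsto (fun d => b d / w d) atTop (𝓝 L)) :
    Tendsto (fun q => (∑' d, b d * q ^ d) / ∑' d, w d * q ^ d) (𝓝[<] 1) (𝓝 L) := by
  have he : (fun d => b d - L * w d) =o[atTop] w := by
    refine (isLittleO_iff_tendsto fun d hd => absurd hd (hw0 d).ne').2 ?_
    simpa using (hb.sub_const L).congr fun d => by
      rw [sub_div, mul_div_cancel_right₀ _ (hw0 d).ne']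
  have hE := ((isLittleO_tsum_mul_pow_of_isLittleO (fun d => (hw0 d).le) hw hW he)
    |>.tendsto_div_nhds_zero).add_const L
  rw [zero_add] at hE
  refine hE.congr' ?_
  filter_upwards [hw, hW.eventually_gt_atTop 0] with q hwq hWq
  have hsplit :
      ∑' d, b d * q ^ d = ∑' d, (b d - L * w d) * q ^ d + L * ∑' d, w d * q ^ d := by
    rw [← tsum_mul_left, ← (summable_mul_pow_of_isBigO hwq he.isBigO).tsum_add (hwq.mul_left L)]
    exact tsum_congr fun d => by ring
  rw [hsplit, add_div, mul_div_cancel_right₀ _ hWq.ne']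

end Abelian

theorem isEquivalent_choose_add (m : ℕ) :
    (fun d : ℕ => ((d + m).choose m : ℝ)) ~[atTop]
      fun d => ((d : ℝ) + 1) ^ m / m.factorial := by
  -- `m! * (d + m).choose m` is the rising factorial of `d + 1`, the value of a monic polynomial
  -- of degree `m`.
  have hP := (Polynomial.isEquivalent_atTop_lead (ascPochhammer ℝ m)).comp_tendsto
    (tendsto_atTop_add_const_right atTop 1 tendsto_natCast_atTop_atTop)
  simp only [Function.comp_def, (monic_ascPochhammer ℝ m).leadingCoeff, ascPochhammer_natDegree,
    one_mul] at hP
  refine (hP.div (IsEquivalent.refl (u := fun _ => (m.factorial : ℝ)))).congr_left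
    (.of_forall fun d => ?_)
  simp only [Pi.div_apply]
  rw [← Nat.cast_succ, ← ascPochhammer_eval_cast, ascPochhammer_nat_eq_ascFactorial,
    Nat.ascFactorial_eq_factorial_mul_choose]
  push_cast
  field_simp

theorem tendsto_succ_div_choose_of_tendsto_div_pow {a : ℕ → ℝ} {m : ℕ} {ρ : ℝ}
    (ha : Tendsto (fun d : ℕ => a d / (d : ℝ) ^ m) atTop (𝓝 ρ)) :
    Tendsto (fun d => a (d + 1) / ((d + m).choose m : ℝ)) atTop (𝓝 (ρ * m.factorial)) := by
  have hshift := (ha.comp (tendsto_add_atTop_nat 1)).mul_const (m.factorial : ℝ)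
  refine (IsEquivalent.refl.div (isEquivalent_choose_add m).symm).tendsto_nhds
    (hshift.congr fun d => ?_)
  simp [div_div_eq_mul_div, div_mul_eq_mul_div]

theorem tendsto_inv_one_sub_pow_nhdsLT {n : ℕ} (hn : n ≠ 0) :
    Tendsto (fun q : ℝ => ((1 - q) ^ n)⁻¹) (𝓝[<] 1) atTop := by
  refine tendsto_inv_nhdsGT_zero.comp (tendsto_nhdsWithin_iff.2 ⟨?_, ?_⟩)
  · have : Tendsto (fun q : ℝ => (1 - q) ^ n) (𝓝 1) (𝓝 ((1 - 1) ^ n)) :=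
      ((continuous_const.sub continuous_id).pow n).tendsto 1
    rw [sub_self, zero_pow hn] at this
    exact tendsto_nhdsWithin_of_tendsto_nhds this
  · filter_upwards [self_mem_nhdsWithin] with q (hq : q < 1)
    exact Set.mem_Ioi.2 (pow_pos (sub_pos.2 hq) n)

theorem abel_type_asymptotic (m : ℕ) (ρ : ℝ) (a : ℕ → ℝ)
    (ha : Filter.Tendsto (fun d : ℕ => a d / (d : ℝ) ^ m) Filter.atTop (nhds ρ)) :
    (∀ q : ℝ, 0 ≤ q → q < 1 → Summable (fun d : ℕ => a (d + 1) * q ^ (d + 1))) ∧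
    Filter.Tendsto
      (fun q : ℝ => (1 - q) ^ (m + 1) * ∑' d : ℕ, a (d + 1) * q ^ (d + 1))
      (nhdsWithin 1 (Set.Iio 1)) (nhds (ρ * Nat.factorial m)) := by
  set w : ℕ → ℝ := fun d => ((d + m).choose m : ℝ)
  have hw0 : ∀ d, 0 < w d := fun d => Nat.cast_pos.2 (Nat.choose_pos (Nat.le_add_left m d))
  have hw : ∀ q : ℝ, |q| < 1 → HasSum (fun d => w d * q ^ d) ((1 - q) ^ (m + 1))⁻¹ :=
    fun q hq => by simpa using hasSum_choose_mul_geometric_of_norm_lt_one m (r := q) hq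
  have hb := tendsto_succ_div_choose_of_tendsto_div_pow ha
  have hsum : ∀ q : ℝ, |q| < 1 → Summable fun d => a (d + 1) * q ^ d := fun q hq =>
    summable_mul_pow_of_isBigO (hw q hq).summable
      (isBigO_of_div_tendsto_nhds (.of_forall fun d hd => absurd hd (hw0 d).ne') _ hb)
  have hshift : ∀ q : ℝ, ∑' d, a (d + 1) * q ^ (d + 1) = q * ∑' d, a (d + 1) * q ^ d :=
    fun q => by rw [← tsum_mul_left]; exact tsum_congr fun d => by ring
  have hnear : ∀ᶠ q in 𝓝[<] (1 : ℝ), |q| < 1 := by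
    filter_upwards [Ioo_mem_nhdsLT (show (-1 : ℝ) < 1 by norm_num)] with q hq using abs_lt.2 hq
  refine ⟨fun q h0 h1 => ((hsum q (abs_lt.2 ⟨by linarith, h1⟩)).mul_left q).congr
    fun d => by ring, ?_⟩
  have hW : Tendsto (fun q => ∑' d, w d * q ^ d) (𝓝[<] 1) atTop :=
    (tendsto_inv_one_sub_pow_nhdsLT m.succ_ne_zero).congr'
      (hnear.mono fun q hq => (hw q hq).tsum_eq.symm)
  have hratio := tendsto_tsum_mul_pow_div_tsum hw0 (hnear.mono fun q hq => (hw q hq).summable)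
    hW hb
  have hlim := (tendsto_nhdsWithin_of_tendsto_nhds tendsto_id).mul hratio
  rw [one_mul] at hlim
  refine hlim.congr' (hnear.mono fun q hq => ?_)
  dsimp only [id]
  rw [(hw q hq).tsum_eq, hshift, div_inv_eq_mul]
  ring
end
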